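/- arXiv:1611.02727 — 2 statements merged into one kernel-verified Lean document; each statement's English description precedes it below -/
import Mathlib

section
/- Let Y be a finitely generated module over Λ = O[[Γ]] (Γ ≅ Z_p) and Z ⊆ Y a free Λ-submodule. If Y contains no nonzero finite Λ-submodule, then Y/Z contains no nonzero finite Λ-submodule. -/
/-!
A finite submodule `S` of `Y ⧸ Z` is killed by `f = ϖ ^ a` and by `g = X ^ n` for some `a, n`,
since `ϖ` and `X` lie in the maximal ideal of the local ring `O⟦X⟧`. For `e` in the preimage `E`
of `S`, the elements `f • e` and `g • e` lie in the free module `Z` and satisfy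
`g • (f • e) = f • (g • e)`; as `f ∣ g * a` forces `f ∣ a`, comparing coordinates gives
`f • e = f • z` with `z ∈ Z`. So `e - z` is an `f`-torsion element of `E`. Since `Z` has no
`f`-torsion, the `f`-torsion of `E` embeds into `S`, so it is finite and hence zero. Thus `E = Z`
and `S = 0`.
-/

open PowerSeries

section

variable {R M : Type*} [CommRing R] [AddCommGroup M] [Module R M]

theorem exists_pow_smul_eq_zero_of_finite [IsLocalRing R] [Finite M] {t : R}
    (ht : t ∈ IsLocalRing.maximalIdeal R) : ∃ a : ℕ, ∀ x : M, t ^ a • x = 0 := by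
  obtain ⟨a, b, hab, heq⟩ :=
    Finite.exists_ne_map_eq_of_infinite fun k : ℕ => ((t ^ k • ·) : M → M)
  wlog hlt : a < b generalizing a b
  · exact this b a hab.symm heq.symm (by omega)
  have hunit : IsUnit (1 - t ^ (b - a)) :=
    IsLocalRing.isUnit_one_sub_self_of_mem_nonunits _ <|
      (IsLocalRing.mem_maximalIdeal _).1 (Ideal.pow_mem_of_mem _ ht _ (by omega))
  refine ⟨a, fun x => ?_⟩
  have hx : ((1 - t ^ (b - a)) * t ^ a) • x = 0 := by
    rw [sub_mul, one_mul, ← pow_add, Nat.sub_add_cancel hlt.le, sub_smul, sub_eq_zero]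
    exact congrFun heq x
  rwa [mul_smul, hunit.smul_eq_zero] at hx

theorem Module.Basis.exists_smul_eq_of_forall_dvd_repr {ι : Type*} (b : Basis ι R M) {f : R}
    {u : M} (h : ∀ i, f ∣ b.repr u i) : ∃ z, f • z = u := by
  choose c hc using h
  refine ⟨(b.repr u).sum fun i _ => c i • b i, ?_⟩
  conv_rhs => rw [← b.linearCombination_repr u, Finsupp.linearCombination_apply]
  simp only [Finsupp.smul_sum, smul_smul, ← hc]
  rfl

theorem Module.Free.exists_smul_eq_of_smul_eq_smul [Module.Free R M] {f g : R}
    (hfg : ∀ a : R, f ∣ g * a → f ∣ a) {u v : M} (h : g • u = f • v) :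
    ∃ z, f • z = u := by
  let b := Module.Free.chooseBasis R M
  refine b.exists_smul_eq_of_forall_dvd_repr fun i => hfg _ ⟨b.repr v i, ?_⟩
  simpa using congrArg (fun w => b.repr w i) h

theorem Submodule.finite_inf_comap_mkQ {Z K : Submodule R M} (hZK : Disjoint Z K)
    (S : Submodule R (M ⧸ Z)) [Finite S] : Finite (K ⊓ S.comap Z.mkQ : Submodule R M) := by
  refine Finite.of_injective (fun x => (⟨Z.mkQ x, x.2.2⟩ : S)) fun x y hxy => ?_
  have hZ : (x : M) - y ∈ Z := (Submodule.Quotient.eq Z).1 (congrArg Subtype.val hxy)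
  exact Subtype.ext <| sub_eq_zero.1 <|
    Submodule.disjoint_def.1 hZK _ hZ (K.sub_mem x.2.1 y.2.1)

theorem Submodule.eq_bot_of_finite_of_smul_eq_zero [IsDomain R] {Z : Submodule R M}
    [Module.Free R Z] (hM : ∀ S : Submodule R M, Finite S → S = ⊥) {f g : R} (hf : f ≠ 0)
    (hfg : ∀ a : R, f ∣ g * a → f ∣ a) (S : Submodule R (M ⧸ Z)) [Finite S]
    (hfS : ∀ s : S, f • s = 0) (hgS : ∀ s : S, g • s = 0) : S = ⊥ := by
  set E := S.comap Z.mkQ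
  set K := LinearMap.ker (LinearMap.lsmul R M f)
  have hZK : Disjoint Z K := Submodule.disjoint_def.2 fun x hxZ hxK =>
    congrArg Subtype.val <|
      (smul_eq_zero.1 (Subtype.ext hxK : f • (⟨x, hxZ⟩ : Z) = 0)).resolve_left hf
  have hKE : K ⊓ E = ⊥ := hM _ (Submodule.finite_inf_comap_mkQ hZK S)
  have hZE : Z ≤ E := Z.ker_mkQ ▸ LinearMap.ker_le_comap _
  have hZ_of_kills : ∀ r : R, (∀ s : S, r • s = 0) → ∀ e ∈ E, r • e ∈ Z := fun r hr e he =>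
    (Submodule.Quotient.mk_eq_zero Z).1 (congrArg Subtype.val (hr ⟨_, he⟩))
  have hEZ : E ≤ Z := by
    intro e he
    obtain ⟨z, hz⟩ := Module.Free.exists_smul_eq_of_smul_eq_smul hfg
      (u := (⟨f • e, hZ_of_kills f hfS e he⟩ : Z)) (v := ⟨g • e, hZ_of_kills g hgS e he⟩)
      (Subtype.ext (smul_comm g f e))
    have hK : e - z ∈ K := by
      rw [LinearMap.mem_ker, LinearMap.lsmul_apply, smul_sub, ← Submodule.coe_smul, hz,
        sub_self]
    have hmem : e - z ∈ K ⊓ E := ⟨hK, E.sub_mem he (hZE z.2)⟩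
    rw [hKE, Submodule.mem_bot, sub_eq_zero] at hmem
    exact hmem ▸ z.2
  rw [← Submodule.map_comap_eq_of_surjective Z.mkQ_surjective S, eq_bot_iff,
    ← Z.mkQ_map_self]
  exact Submodule.map_mono hEZ

end

theorem PowerSeries.C_dvd_of_dvd_X_pow_mul {R : Type*} [CommRing R] [IsDomain R] {c : R}
    (hc : c ≠ 0) {n : ℕ} {a : R⟦X⟧} (hdvd : C c ∣ X ^ n * a) : C c ∣ a := by
  obtain ⟨b, h⟩ := hdvd
  have hXb : X ^ n ∣ b := X_pow_dvd_iff.2 fun j hj => by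
    have := X_pow_dvd_iff.1 (h ▸ dvd_mul_right (X ^ n) a) j hj
    rwa [coeff_C_mul, mul_eq_zero, or_iff_right hc] at this
  obtain ⟨d, rfl⟩ := hXb
  refine ⟨d, mul_left_cancel₀ (pow_ne_zero n X_ne_zero) ?_⟩
  rw [h]
  ring

theorem GV_no_finite_submodule_quotient_general
    (O : Type*) [CommRing O] [IsDomain O] [IsDiscreteValuationRing O]
    (Y : Type*) [AddCommGroup Y] [Module (PowerSeries O) Y]
    (Z : Submodule (PowerSeries O) Y) (hZ : Module.Free (PowerSeries O) Z)
    (hY : ∀ S : Submodule (PowerSeries O) Y, Finite S → S = ⊥) :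
    ∀ S : Submodule (PowerSeries O) (Y ⧸ Z), Finite S → S = ⊥ := by
  intro S hS
  obtain ⟨ϖ, hϖ⟩ := IsDiscreteValuationRing.exists_irreducible O
  have hC : C ϖ ∈ IsLocalRing.maximalIdeal O⟦X⟧ := fun h =>
    hϖ.not_isUnit (by simpa using isUnit_iff_constantCoeff.1 h)
  have hX : X ∈ IsLocalRing.maximalIdeal O⟦X⟧ := fun h =>
    not_isUnit_zero (M₀ := O) (by simpa using isUnit_iff_constantCoeff.1 h)
  obtain ⟨a, ha⟩ := exists_pow_smul_eq_zero_of_finite (M := S) hC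
  obtain ⟨n, hn⟩ := exists_pow_smul_eq_zero_of_finite (M := S) hX
  have hϖa : ϖ ^ a ≠ 0 := pow_ne_zero a hϖ.ne_zero
  rw [← map_pow] at ha
  exact Submodule.eq_bot_of_finite_of_smul_eq_zero hY ((map_ne_zero_iff _ C_injective).2 hϖa)
    (fun _ => C_dvd_of_dvd_X_pow_mul hϖa) S ha hn

/-- Let `Y` be a finitely generated module over `Λ = O[[Γ]] ≅ O[[T]]`
(`Γ ≅ ℤ_p`, `O` the ring of integers of a finite extension of `ℚ_p`, i.e. a complete DVR),
and `Z ⊆ Y` a free `Λ`-submodule.  If `Y` contains no nonzero finite `Λ`-submodule, then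
`Y / Z` contains no nonzero finite `Λ`-submodule. -/
theorem GV_no_finite_submodule_quotient
    (O : Type*) [CommRing O] [IsDomain O] [IsDiscreteValuationRing O]
    (Y : Type*) [AddCommGroup Y] [Module (PowerSeries O) Y]
    [Module.Finite (PowerSeries O) Y]
    (Z : Submodule (PowerSeries O) Y) (hZ : Module.Free (PowerSeries O) Z)
    (hY : ∀ S : Submodule (PowerSeries O) Y, Finite S → S = ⊥) :
    ∀ S : Submodule (PowerSeries O) (Y ⧸ Z), Finite S → S = ⊥ :=
  GV_no_finite_submodule_quotient_general O Y Z hZ hY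
end

section
/- Let 0 → M' → M → M'' → 0 be a short exact sequence of finitely generated Λ-modules, where Λ = O[[Γ]] with Γ ≅ Z_p. If M is free over Λ and M'' is finitely generated and free as an O-module, then M' is free over Λ. -/
/-!
Write `Λ = O⟦X⟧`. A finitely generated `Λ`-module `N` on which `X` is regular is free as soon as
`N ⧸ X N` is free over `Λ ⧸ (X) = O`: a lift of a basis generates `N` by Nakayama, and it is
independent because the coefficients of a relation are divisible by `X`, hence by every power of
`X`. For `M' ⊆ M` regularity is inherited from `M`, and the snake lemma for multiplication by `X`
gives `0 → M''[X] → M' ⧸ X M' → M ⧸ X M ≅ Oⁿ`. The outer terms are free over the principal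
ideal domain `O`, so `M' ⧸ X M'` is free, with a basis made of lifts of a basis of its image in
`M ⧸ X M` together with lifts, through the connecting map, of a basis of `M''[X]`.
-/

open PowerSeries

section BasisMod

variable {R N M : Type*} [CommRing R] [AddCommGroup N] [Module R N] [AddCommGroup M] [Module R M]

/-- The images of `f ∘ v` in `M ⧸ x • M` form a basis of the image of `f` over `R ⧸ (x)`. -/
structure IsBasisMod (x : R) (f : N →ₗ[R] M) {ι : Type*} [Fintype ι] (v : ι → N) :
    Prop where
  exists_eq_sum_add_smul (p : N) :
    ∃ (c : ι → R) (m : M), f p = ∑ i, c i • f (v i) + x • m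
  dvd_of_sum_eq_smul (c : ι → R) (m : M) : ∑ i, c i • f (v i) = x • m → ∀ i, x ∣ c i

variable {x : R} {ι : Type*} [Fintype ι] {v : ι → N}

theorem IsBasisMod.span_eq_top [Module.Finite R N] (hx : x ∈ Ideal.jacobson ⊥)
    (hv : IsBasisMod x LinearMap.id v) : Submodule.span R (Set.range v) = ⊤ := by
  refine top_le_iff.mp (Submodule.le_of_le_smul_of_le_jacobson_bot Module.Finite.fg_top
    (I := Ideal.span {x}) ((Ideal.span_singleton_le_iff_mem _).mpr hx) fun p _ => ?_)
  obtain ⟨c, m, rfl⟩ := hv.exists_eq_sum_add_smul p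
  exact Submodule.add_mem_sup
    (Submodule.sum_mem _ fun i _ => Submodule.smul_mem _ _ (Submodule.subset_span ⟨i, rfl⟩))
    (Submodule.smul_mem_smul (Ideal.mem_span_singleton_self x) trivial)

theorem IsBasisMod.linearIndependent (hsep : ∀ r : R, (∀ n, x ^ n ∣ r) → r = 0)
    (hx : IsSMulRegular N x) (hv : IsBasisMod x LinearMap.id v) : LinearIndependent R v := by
  have hpow : ∀ n (c : ι → R), ∑ i, c i • v i = 0 → ∀ i, x ^ n ∣ c i := by
    intro n
    induction n with
    | zero => simp
    | succ n ih =>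
      intro c hc
      choose d hd using hv.dvd_of_sum_eq_smul c 0 (by simpa using hc)
      have hd0 : ∑ i, d i • v i = 0 := hx <| by
        simpa [Finset.smul_sum, smul_smul, ← hd] using hc
      intro i
      rw [hd i, pow_succ']
      exact mul_dvd_mul_left x (ih d hd0 i)
  exact Fintype.linearIndependent_iff.mpr fun c hc i => hsep _ fun n => hpow n c hc i

theorem IsBasisMod.free [Module.Finite R N] (hx : x ∈ Ideal.jacobson ⊥)
    (hsep : ∀ r : R, (∀ n, x ^ n ∣ r) → r = 0) (hreg : IsSMulRegular N x)
    (hv : IsBasisMod x LinearMap.id v) : Module.Free R N :=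
  .of_basis (Module.Basis.mk (hv.linearIndependent hsep hreg) (hv.span_eq_top hx).ge)

theorem IsBasisMod.of_linearEquiv_comp {P : Type*} [AddCommGroup P] [Module R P]
    {f : N →ₗ[R] M} (e : M ≃ₗ[R] P) (hv : IsBasisMod x (e.toLinearMap ∘ₗ f) v) :
    IsBasisMod x f v where
  exists_eq_sum_add_smul p := by
    obtain ⟨c, m, h⟩ := hv.exists_eq_sum_add_smul p
    exact ⟨c, e.symm m, e.injective (by simpa using h)⟩
  dvd_of_sum_eq_smul c m hc := hv.dvd_of_sum_eq_smul c (e m) (by simpa using congrArg e hc)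

theorem IsBasisMod.sum_elim_of_exact {P : Type*} [AddCommGroup P] [Module R P]
    {f : N →ₗ[R] M} {g : M →ₗ[R] P}
    (hf : Function.Injective f) (hfg : Function.Exact f g) (hx : IsSMulRegular M x)
    {α β : Type*} [Fintype α] [Fintype β] {a : α → N} (ha : IsBasisMod x f a) {e : β → P}
    (he_span : ∀ n, x • n = 0 → ∃ c : β → R, n = ∑ l, c l • e l)
    (he_dvd : ∀ c : β → R, ∑ l, c l • e l = 0 → ∀ l, x ∣ c l)
    {m : β → M} (hm : ∀ l, g (m l) = e l) {δ : β → N} (hδ : ∀ l, f (δ l) = x • m l) :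
    IsBasisMod x LinearMap.id (Sum.elim δ a) := by
  have hgf (p : N) : g (f p) = 0 := hfg.apply_apply_eq_zero p
  constructor
  · intro p
    obtain ⟨c, m₀, hp⟩ := ha.exists_eq_sum_add_smul p
    obtain ⟨d, hd⟩ : ∃ d : β → R, g m₀ = ∑ l, d l • e l := he_span _ <| by
      rw [← map_smul, ← hgf (p - ∑ j, c j • a j)]
      simp [hp]
    obtain ⟨p₁, hp₁⟩ : m₀ - ∑ l, d l • m l ∈ LinearMap.range f :=
      (hfg _).mp (by simp [hd, hm])
    refine ⟨Sum.elim d c, p₁, hf ?_⟩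
    simp only [LinearMap.id_coe, id_eq, Fintype.sum_sum_type, Sum.elim_inl, Sum.elim_inr,
      map_add, map_sum, map_smul, hp, hδ, hp₁]
    simp only [smul_sub, Finset.smul_sum, smul_comm x (d _)]
    abel
  · intro c p₂ hc
    simp only [LinearMap.id_coe, id_eq, Fintype.sum_sum_type, Sum.elim_inl, Sum.elim_inr] at hc
    have hfc := congrArg f hc
    simp only [map_add, map_sum, map_smul, hδ] at hfc
    choose d hd using
      ha.dvd_of_sum_eq_smul (c ∘ Sum.inr) (f p₂ - ∑ l, c (Sum.inl l) • m l) <| by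
        simp only [Function.comp_apply, smul_sub, ← hfc, Finset.smul_sum, smul_comm x (c _)]
        abel
    have hlift : ∑ l, c (Sum.inl l) • m l + ∑ j, d j • f (a j) = f p₂ := hx <| by
      simp only [smul_add, Finset.smul_sum, smul_comm x (c _), smul_smul, ← hd, ← hfc]
      simp
    have hce := congrArg g hlift
    simp only [map_add, map_sum, map_smul, hm, hgf, smul_zero, Finset.sum_const_zero,
      add_zero] at hce
    rintro (l | j)
    · exact he_dvd _ hce l
    · exact ⟨d j, hd j⟩

end BasisMod

namespace PowerSeries

variable {O N M : Type*} [CommRing O] [AddCommGroup N] [Module O⟦X⟧ N] [AddCommGroup M]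
  [Module O⟦X⟧ M]

theorem X_mem_jacobson_bot : (X : O⟦X⟧) ∈ Ideal.jacobson ⊥ :=
  Ideal.mem_jacobson_bot.mpr fun _ => isUnit_iff_constantCoeff.mpr (by simp)

theorem eq_zero_of_forall_X_pow_dvd {φ : O⟦X⟧} (h : ∀ n, X ^ n ∣ φ) : φ = 0 := by
  ext n
  exact X_pow_dvd_iff.mp (h (n + 1)) n n.lt_succ_self

theorem smul_eq_constantCoeff_smul [Module O M] [IsScalarTower O O⟦X⟧ M] {m : M}
    (hm : (X : O⟦X⟧) • m = 0) (r : O⟦X⟧) : r • m = constantCoeff r • m := by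
  conv_lhs => rw [eq_X_mul_shift_add_const r]
  rw [add_smul, mul_comm, mul_smul, hm, smul_zero, zero_add, C_eq_algebraMap,
    algebraMap_smul]

variable [IsDomain O] [IsPrincipalIdealRing O]

theorem exists_isBasisMod_X_of_pi {ι : Type*} [Fintype ι] (F : N →ₗ[O⟦X⟧] (ι → O⟦X⟧)) :
    ∃ (t : ℕ) (a : Fin t → N), IsBasisMod X F a := by
  let ρ : (ι → O⟦X⟧) →ₗ[O] (ι → O) := (coeff 0).compLeft ι
  have hρ_smul (r : O⟦X⟧) (v : ι → O⟦X⟧) : ρ (r • v) = constantCoeff r • ρ v := by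
    ext i; simp [ρ]
  have hρ_eq_zero {v : ι → O⟦X⟧} (hv : ρ v = 0) : ∃ m, v = (X : O⟦X⟧) • m := by
    choose m hm using fun i => X_dvd_iff.mpr (by simpa [ρ] using congrFun hv i)
    exact ⟨m, funext fun i => by simp [hm i]⟩
  let U : Submodule O (ι → O) := ((LinearMap.range F).restrictScalars O).map ρ
  obtain ⟨t, u⟩ := Submodule.basisOfPid (Pi.basisFun O ι) U
  have hlift (j : Fin t) : ∃ p, ρ (F p) = u j := by
    obtain ⟨_, ⟨p, rfl⟩, h⟩ := (u j).2
    exact ⟨p, h⟩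
  choose a ha using hlift
  refine ⟨t, a, fun p => ?_, fun c m hc => ?_⟩
  · let c := u.equivFun ⟨ρ (F p), F p, ⟨p, rfl⟩, rfl⟩
    have hc : ρ (F p) = ∑ j, c j • (u j : ι → O) := by
      simpa only [Submodule.coe_sum, Submodule.coe_smul] using
        congrArg Subtype.val (u.sum_equivFun ⟨ρ (F p), F p, ⟨p, rfl⟩, rfl⟩).symm
    obtain ⟨m, hm⟩ := hρ_eq_zero (v := F p - ∑ j, C (c j) • F (a j)) <| by
      simp [hρ_smul, ha, hc]
    exact ⟨fun j => C (c j), m, by rw [← hm]; abel⟩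
  · have hu : ∑ j, constantCoeff (c j) • (u j : ι → O) = 0 := by
      simpa [hρ_smul, ha] using congrArg ρ hc
    exact fun j => X_dvd_iff.mpr <| Fintype.linearIndependent_iff.mp
      (u.linearIndependent.map' U.subtype U.ker_subtype) _ hu j

theorem exists_isBasisMod_X_of_free [Module.Free O⟦X⟧ M] [Module.Finite O⟦X⟧ M]
    (f : N →ₗ[O⟦X⟧] M) : ∃ (t : ℕ) (a : Fin t → N), IsBasisMod X f a := by
  obtain ⟨t, a, ha⟩ := exists_isBasisMod_X_of_pi
    ((Module.Free.chooseBasis O⟦X⟧ M).equivFun.toLinearMap ∘ₗ f)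
  exact ⟨t, a, ha.of_linearEquiv_comp _⟩

theorem exists_basis_torsionBy_X [Module O M] [IsScalarTower O O⟦X⟧ M] [Module.Finite O M]
    [Module.Free O M] : ∃ (s : ℕ) (e : Fin s → M), (∀ l, (X : O⟦X⟧) • e l = 0) ∧
      (∀ n : M, (X : O⟦X⟧) • n = 0 → ∃ c : Fin s → O⟦X⟧, n = ∑ l, c l • e l) ∧
      ∀ c : Fin s → O⟦X⟧, ∑ l, c l • e l = 0 → ∀ l, X ∣ c l := by
  let W := (Submodule.torsionBy O⟦X⟧ M X).restrictScalars O
  obtain ⟨s, w⟩ := Submodule.basisOfPid (Module.Free.chooseBasis O M) W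
  refine ⟨s, fun l => w l, fun l => (w l).2,
    fun n hn => ⟨fun l => C (w.equivFun ⟨n, hn⟩ l), ?_⟩, fun c hc l => ?_⟩
  · simpa only [C_eq_algebraMap, algebraMap_smul, Submodule.coe_sum, Submodule.coe_smul] using
      congrArg Subtype.val (w.sum_equivFun ⟨n, hn⟩).symm
  · have hw : ∑ l, constantCoeff (c l) • (w l : M) = 0 := by
      simpa only [smul_eq_constantCoeff_smul (w _).2] using hc
    exact X_dvd_iff.mpr <| Fintype.linearIndependent_iff.mp
      (w.linearIndependent.map' W.subtype W.ker_subtype) _ hw l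

end PowerSeries

theorem GV_free_kernel_general
    (O : Type*) [CommRing O] [IsDomain O] [IsDiscreteValuationRing O]
    (M' M M'' : Type*)
    [AddCommGroup M'] [Module (PowerSeries O) M'] [Module.Finite (PowerSeries O) M']
    [AddCommGroup M] [Module (PowerSeries O) M] [Module.Finite (PowerSeries O) M]
    [AddCommGroup M''] [Module (PowerSeries O) M'']
    [Module O M''] [IsScalarTower O (PowerSeries O) M'']
    (f : M' →ₗ[PowerSeries O] M) (g : M →ₗ[PowerSeries O] M'')
    (hf : Function.Injective f) (hg : Function.Surjective g)
    (hfg : LinearMap.range f = LinearMap.ker g)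
    [Module.Free (PowerSeries O) M]
    [Module.Finite O M''] [Module.Free O M''] :
    Module.Free (PowerSeries O) M' := by
  have hexact : Function.Exact f g := LinearMap.exact_iff.mpr hfg.symm
  have hregM : IsSMulRegular M (X : O⟦X⟧) := .of_ne_zero X_ne_zero
  obtain ⟨t, a, ha⟩ := exists_isBasisMod_X_of_free f
  obtain ⟨s, e, he_tors, he_span, he_dvd⟩ := exists_basis_torsionBy_X (O := O) (M := M'')
  choose m hm using fun l => hg (e l)
  have hδ (l : Fin s) : ∃ δ, f δ = (X : O⟦X⟧) • m l :=
    (hexact _).mp (by rw [map_smul, hm, he_tors])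
  choose δ hδ using hδ
  exact (ha.sum_elim_of_exact hf hexact hregM he_span he_dvd hm hδ).free X_mem_jacobson_bot
    (fun _ => eq_zero_of_forall_X_pow_dvd) (hregM.of_injective f hf)

/-- Let `0 → M' → M → M'' → 0` be a short exact sequence of finitely
generated modules over `Λ = O[[Γ]] ≅ O[[T]]` (`Γ ≅ ℤ_p`, `O` a complete DVR).  If `M` is
free over `Λ` and `M''` is finitely generated and free as an `O`-module, then `M'` is
free over `Λ`. -/
theorem GV_free_kernel
    (O : Type*) [CommRing O] [IsDomain O] [IsDiscreteValuationRing O]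
    (M' M M'' : Type*)
    [AddCommGroup M'] [Module (PowerSeries O) M'] [Module.Finite (PowerSeries O) M']
    [AddCommGroup M] [Module (PowerSeries O) M] [Module.Finite (PowerSeries O) M]
    [AddCommGroup M''] [Module (PowerSeries O) M''] [Module.Finite (PowerSeries O) M'']
    [Module O M''] [IsScalarTower O (PowerSeries O) M'']
    (f : M' →ₗ[PowerSeries O] M) (g : M →ₗ[PowerSeries O] M'')
    (hf : Function.Injective f) (hg : Function.Surjective g)
    (hfg : LinearMap.range f = LinearMap.ker g)
    [Module.Free (PowerSeries O) M]
    [Module.Finite O M''] [Module.Free O M''] :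
    Module.Free (PowerSeries O) M' :=
  GV_free_kernel_general O M' M M'' f g hf hg hfg
end
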